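/- arXiv:1607.06705 — 2 statements merged into one kernel-verified Lean document; each statement's English description precedes it below -/
import Mathlib

section
/- Let R be an integral domain, ★ a star operation on R, and J ⊆ I nonzero fractional ideals of R. Then J is a ★-reduction of I if and only if J^n is a ★-reduction of I^n, for any fixed positive integer n. -/
open scoped nonZeroDivisors

/-- A star operation on a domain `R` with fraction field `K`: a map on (nonzero) fractional
ideals satisfying `(xR)^★ = xR`, `(xI)^★ = x I^★`, `I ⊆ I^★`, monotonicity, and idempotency. -/
structure StarOperation (R K : Type*) [CommRing R] [IsDomain R] [Field K] [Algebra R K]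
    [IsFractionRing R K] where
  star : FractionalIdeal R⁰ K → FractionalIdeal R⁰ K
  star_spanSingleton : ∀ x : K, x ≠ 0 →
    star (FractionalIdeal.spanSingleton R⁰ x) = FractionalIdeal.spanSingleton R⁰ x
  star_spanSingleton_mul : ∀ (x : K) (I : FractionalIdeal R⁰ K), x ≠ 0 → I ≠ 0 →
    star (FractionalIdeal.spanSingleton R⁰ x * I) = FractionalIdeal.spanSingleton R⁰ x * star I
  le_star : ∀ I : FractionalIdeal R⁰ K, I ≠ 0 → I ≤ star I
  star_mono : ∀ I J : FractionalIdeal R⁰ K, I ≠ 0 → I ≤ J → star I ≤ star J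
  star_star : ∀ I : FractionalIdeal R⁰ K, I ≠ 0 → star (star I) = star I

/-- `J` is a `★`-reduction of `I` if `(J · I^n)^★ = (I^(n+1))^★` for some integer `n ≥ 0`. -/
def IsStarReduction {R K : Type*} [CommRing R] [IsDomain R] [Field K] [Algebra R K]
    [IsFractionRing R K] (s : StarOperation R K) (J I : FractionalIdeal R⁰ K) : Prop :=
  ∃ n : ℕ, s.star (J * I ^ n) = s.star (I ^ (n + 1))

/-!
The closure identity `(A^★ B)^★ = (A B)^★` makes `★`-equivalence compatible with products,
so raising `(J I^m)^★ = (I^(m+1))^★` to the `n`-th power shows that `J^n` is a `★`-reduction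
of `I^n`. Conversely, if `(J^n (I^n)^k)^★ = ((I^n)^(k+1))^★`, then `J ⊆ I` gives
`J^n (I^n)^k ⊆ J I^m ⊆ I^(m+1)` for `m = n(k+1) - 1`, and the middle term is squeezed
between two ideals with the same `★`-closure.
-/

instance {R P : Type*} [CommRing R] {S : Submonoid R} [CommRing P] [NoZeroDivisors P]
    [Algebra R P] : NoZeroDivisors (FractionalIdeal S P) :=
  FractionalIdeal.coeToSubmodule_injective.noZeroDivisors _ FractionalIdeal.coe_zero
    FractionalIdeal.coe_mul

namespace StarOperation

open FractionalIdeal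

variable {R K : Type*} [CommRing R] [IsDomain R] [Field K] [Algebra R K] [IsFractionRing R K]
  (s : StarOperation R K) {A B C A' B' : FractionalIdeal R⁰ K}

lemma star_ne_zero (hA : A ≠ 0) : s.star A ≠ 0 :=
  ((pos_iff_ne_zero.2 hA).trans_le (s.le_star A hA)).ne'

lemma star_mul_le_star_mul (hA : A ≠ 0) : s.star A * B ≤ s.star (A * B) := by
  refine mul_le.2 fun i hi j hj => ?_
  obtain rfl | hj0 := eq_or_ne j 0
  · simpa using (s.star (A * B)).zero_mem
  have hjA : spanSingleton R⁰ j * A ≤ A * B :=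
    spanSingleton_mul_le_iff.2 fun a ha => mul_comm a j ▸ mul_mem_mul ha hj
  have hji : j * i ∈ s.star (spanSingleton R⁰ j * A) := by
    rw [s.star_spanSingleton_mul j A hj0 hA]
    exact mul_mem_mul (mem_spanSingleton_self R⁰ j) hi
  have hj0' : spanSingleton R⁰ j ≠ 0 := spanSingleton_ne_zero_iff.2 hj0
  exact mul_comm j i ▸ s.star_mono _ _ (mul_ne_zero hj0' hA) hjA hji

lemma star_star_mul (hA : A ≠ 0) (hB : B ≠ 0) : s.star (s.star A * B) = s.star (A * B) := by
  refine le_antisymm ?_ (s.star_mono _ _ (mul_ne_zero hA hB) (mul_le_mul_left (s.le_star A hA) B))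
  rw [← s.star_star _ (mul_ne_zero hA hB)]
  exact s.star_mono _ _ (mul_ne_zero (s.star_ne_zero hA) hB) (s.star_mul_le_star_mul hA)

lemma star_mul_congr (hA : A ≠ 0) (hA' : A' ≠ 0) (hB : B ≠ 0) (hB' : B' ≠ 0)
    (h : s.star A = s.star A') (h' : s.star B = s.star B') :
    s.star (A * B) = s.star (A' * B') := by
  calc s.star (A * B) = s.star (s.star A * B) := (s.star_star_mul hA hB).symm
    _ = s.star (A' * B) := by rw [h, s.star_star_mul hA' hB]
    _ = s.star (s.star B * A') := by rw [mul_comm, s.star_star_mul hB hA']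
    _ = s.star (A' * B') := by rw [h', s.star_star_mul hB' hA', mul_comm]

lemma star_pow_congr (hA : A ≠ 0) (hA' : A' ≠ 0) (h : s.star A = s.star A') (n : ℕ) :
    s.star (A ^ n) = s.star (A' ^ n) := by
  induction n with
  | zero => rfl
  | succ n ih =>
    simpa only [pow_succ] using
      s.star_mul_congr (pow_ne_zero n hA) (pow_ne_zero n hA') hA hA' ih h

lemma star_eq_of_le_of_le (hA : A ≠ 0) (hAB : A ≤ B) (hBC : B ≤ C)
    (h : s.star A = s.star C) : s.star B = s.star C :=
  le_antisymm (s.star_mono _ _ ((pos_iff_ne_zero.2 hA).trans_le hAB).ne' hBC)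
    (h ▸ s.star_mono _ _ hA hAB)

end StarOperation

namespace IsStarReduction

variable {R K : Type*} [CommRing R] [IsDomain R] [Field K] [Algebra R K] [IsFractionRing R K]
  {s : StarOperation R K} {J I : FractionalIdeal R⁰ K}

lemma pow (h : IsStarReduction s J I) (hJ : J ≠ 0) (hI : I ≠ 0) (n : ℕ) :
    IsStarReduction s (J ^ n) (I ^ n) := by
  obtain ⟨m, hm⟩ := h
  refine ⟨m, ?_⟩
  have := s.star_pow_congr (mul_ne_zero hJ (pow_ne_zero m hI)) (pow_ne_zero (m + 1) hI) hm n
  rwa [mul_pow, pow_right_comm I m n, pow_right_comm I (m + 1) n] at this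

lemma of_pow {n : ℕ} (hn : 0 < n) (h : IsStarReduction s (J ^ n) (I ^ n)) (hJ : J ≠ 0)
    (hJI : J ≤ I) : IsStarReduction s J I := by
  obtain ⟨k, hk⟩ := h
  obtain ⟨n, rfl⟩ := Nat.exists_eq_add_one_of_ne_zero hn.ne'
  have hI : I ≠ 0 := ((pos_iff_ne_zero.2 hJ).trans_le hJI).ne'
  refine ⟨n + (n + 1) * k, s.star_eq_of_le_of_le (A := J ^ (n + 1) * (I ^ (n + 1)) ^ k)
    (mul_ne_zero (pow_ne_zero _ hJ) (pow_ne_zero _ (pow_ne_zero _ hI))) ?_ ?_ ?_⟩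
  · rw [← pow_mul, pow_succ', mul_assoc, pow_add I n]
    gcongr
  · rw [pow_succ']
    gcongr
  · rw [hk, ← pow_mul]
    ring_nf

end IsStarReduction

/-- For nonzero fractional ideals `J ⊆ I` and any positive integer `n`:
`J` is a `★`-reduction of `I` iff `J^n` is a `★`-reduction of `I^n`. -/
theorem starReduction_pow_iff (R K : Type*) [CommRing R] [IsDomain R] [Field K] [Algebra R K]
    [IsFractionRing R K] (s : StarOperation R K) (J I : FractionalIdeal R⁰ K)
    (hJ0 : J ≠ 0) (hI0 : I ≠ 0) (hJI : J ≤ I) (n : ℕ) (hn : 0 < n) :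
    IsStarReduction s J I ↔ IsStarReduction s (J ^ n) (I ^ n) :=
  ⟨fun h => h.pow hJ0 hI0 n, fun h => IsStarReduction.of_pow hn h hJ0 hJI⟩
end

section
/- Let R be an integrally closed domain, I a nonzero finitely generated ideal of R, and J a reduction of I. Then I ⊆ J_t, and hence J_t = I_t; that is, every nonzero finitely generated ideal of an integrally closed domain is t-basic with respect to ordinary reductions. -/
open scoped nonZeroDivisors

/-- The `v`-operation (divisorial closure) on `R`-submodules of the fraction field `K`:
`I_v = (I⁻¹)⁻¹` where `I⁻¹ = (R : I) = 1 / I`. -/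
noncomputable def vS (R K : Type*) [CommRing R] [Field K] [Algebra R K]
    (I : Submodule R K) : Submodule R K := 1 / (1 / I)

/-- The `t`-operation: `I_t = ⋃ J_v` where `J` ranges over nonzero finitely generated
sub-ideals of `I`. -/
noncomputable def tS (R K : Type*) [CommRing R] [Field K] [Algebra R K]
    (I : Submodule R K) : Submodule R K :=
  ⨆ J ∈ {J : Submodule R K | J ≠ ⊥ ∧ J.FG ∧ J ≤ I}, vS R K J

/-- The image of an ideal of `R` in the fraction field `K`, as an `R`-submodule. -/
noncomputable def idealToSub (R K : Type*) [CommRing R] [Field K] [Algebra R K]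
    (I : Ideal R) : Submodule R K := Submodule.map (Algebra.linearMap R K) I

/-- The `t`-closure of an ideal of `R`, computed in the fraction field `K`. -/
noncomputable def tI (R K : Type*) [CommRing R] [Field K] [Algebra R K]
    (I : Ideal R) : Submodule R K := tS R K (idealToSub R K I)

/-- The `v`-closure of an ideal of `R`, computed in the fraction field `K`. -/
noncomputable def vI (R K : Type*) [CommRing R] [Field K] [Algebra R K]
    (I : Ideal R) : Submodule R K := vS R K (idealToSub R K I)

/-!
Write `I_K`, `J_K` for the images of `I`, `J` in `K`. Since `I^(n+1)` is finitely generated, the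
reduction equation `J I^n = I^(n+1)` already holds up to inclusion for a finitely generated
`J₀ ⊆ J_K`: `I_K I^n ⊆ J₀ I^n`. For `x ∈ I_K` and `u ∈ J₀⁻¹` this gives `x u I^n ⊆ I^n`, so `x u`
stabilises a nonzero finitely generated `R`-module and is integral over `R`, hence lies in `R`.
Thus `I_K ⊆ (J₀)_v ⊆ J_t`, and `J_t = I_t` follows because `t` is monotone and `I_t ⊆ (J₀)_v`.
-/

open scoped Pointwise
open Submodule IsLocalization

theorem Submodule.exists_fg_le_of_fg_le_mul {R A : Type*} [CommSemiring R] [Semiring A]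
    [Algebra R A] {N J M : Submodule R A} (hN : N.FG) (h : N ≤ J * M) :
    ∃ J' ≤ J, J'.FG ∧ N ≤ J' * M := by
  have hJ : J = ⨆ x : J, span R {(x : A)} := by
    rw [iSup_span, Set.iUnion_singleton_eq_range, Subtype.range_coe, span_eq]
  obtain ⟨s, hs⟩ := CompleteLattice.IsCompactElement.exists_finset_of_le_iSup _
    ((fg_iff_compact N).mp hN) (fun x : J => span R {(x : A)} * M) (by rwa [← iSup_mul, ← hJ])
  refine ⟨⨆ x ∈ s, span R {(x : A)}, iSup₂_le fun x _ => (span_singleton_le_iff_mem _ _).2 x.2,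
    fg_biSup s _ fun x _ => fg_span_singleton _, ?_⟩
  simpa only [iSup_mul] using hs

theorem Submodule.one_div_le_one_div_of_le {R A : Type*} [CommSemiring R] [CommSemiring A]
    [Algebra R A] {X Y : Submodule R A} (h : X ≤ Y) : 1 / Y ≤ 1 / X :=
  le_div_iff_mul_le.2 <| (mul_le_mul_right h _).trans <| le_div_iff_mul_le.1 le_rfl

section Closure

variable {R K : Type*} [CommRing R] [Field K] [Algebra R K]

theorem le_vS (X : Submodule R K) : X ≤ vS R K X :=
  le_div_iff_mul_le.2 mul_one_div_le_one

theorem vS_mono {X Y : Submodule R K} (h : X ≤ Y) : vS R K X ≤ vS R K Y :=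
  one_div_le_one_div_of_le (one_div_le_one_div_of_le h)

theorem vS_le_of_le_vS {X Y : Submodule R K} (h : X ≤ vS R K Y) : vS R K X ≤ vS R K Y :=
  (vS_mono h).trans (one_div_le_one_div_of_le (le_vS (1 / Y)))

theorem vS_le_tS {X Y : Submodule R K} (h0 : X ≠ ⊥) (hfg : X.FG) (h : X ≤ Y) :
    vS R K X ≤ tS R K Y :=
  le_iSup₂_of_le X ⟨h0, hfg, h⟩ le_rfl

theorem tS_mono {X Y : Submodule R K} (h : X ≤ Y) : tS R K X ≤ tS R K Y :=
  iSup₂_le fun _ hZ => vS_le_tS hZ.1 hZ.2.1 (hZ.2.2.trans h)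

theorem tS_le_vS_of_le_vS {X Y : Submodule R K} (h : X ≤ vS R K Y) : tS R K X ≤ vS R K Y :=
  iSup₂_le fun _ hZ => vS_le_of_le_vS (hZ.2.2.trans h)

theorem le_vS_of_mul_le_mul [IsDomain R] [IsIntegrallyClosed R] [IsFractionRing R K]
    {A B N : Submodule R K} (hN0 : N ≠ ⊥) (hN : N.FG) (h : A * N ≤ B * N) : A ≤ vS R K B := by
  have hBN : 1 / B * (B * N) ≤ N :=
    calc 1 / B * (B * N) = B * (1 / B) * N := by rw [← mul_assoc, mul_comm (1 / B)]
      _ ≤ 1 * N := mul_le_mul_left mul_one_div_le_one N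
      _ = N := one_mul N
  refine le_div_iff_mul_le.2 <| mul_le.2 fun a ha u hu => ?_
  have hint : IsIntegral R (a * u) := isIntegral_of_smul_mem_submodule N hN0 hN _ fun m hm => by
    rw [smul_eq_mul, mul_comm a, mul_assoc]
    exact hBN (mul_mem_mul hu (h (mul_mem_mul ha hm)))
  exact mem_one.2 (IsIntegrallyClosed.isIntegral_iff.1 hint)

end Closure

/-- In an integrally closed domain, if `J` is a reduction of a nonzero finitely generated
ideal `I`, then `I ⊆ J_t` and hence `J_t = I_t`: every nonzero finitely generated ideal is
`t`-basic with respect to ordinary reductions. -/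
theorem t_basic_of_integrallyClosed (R K : Type*) [CommRing R] [IsDomain R]
    [IsIntegrallyClosed R] [Field K] [Algebra R K] [IsFractionRing R K]
    (I J : Ideal R) (hI0 : I ≠ 0) (hIfg : I.FG) (hJI : J ≤ I)
    (hred : ∃ n : ℕ, J * I ^ n = I ^ (n + 1)) :
    idealToSub R K I ≤ tI R K J ∧ tI R K J = tI R K I := by
  -- `idealToSub R K` is `coeSubmodule K` by definition.
  obtain ⟨n, hn⟩ := hred
  have hinj := IsFractionRing.injective R K
  have hpow_ne (m : ℕ) : coeSubmodule K (I ^ m) ≠ ⊥ := by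
    rw [Ne, ← coeSubmodule_bot K, (IsFractionRing.coeSubmodule_injective R K).eq_iff]
    exact pow_ne_zero m hI0
  have hle : coeSubmodule K (I ^ (n + 1)) ≤ coeSubmodule K J * coeSubmodule K (I ^ n) := by
    rw [← hn, coeSubmodule_mul]
  obtain ⟨J₀, hJ₀J, hJ₀fg, hJ₀⟩ :=
    exists_fg_le_of_fg_le_mul ((coeSubmodule_fg K hinj _).2 hIfg.pow) hle
  have hJ₀0 : J₀ ≠ ⊥ := fun h => hpow_ne (n + 1) (eq_bot_iff.2 (by simpa [h] using hJ₀))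
  have hI : coeSubmodule K I ≤ vS R K J₀ :=
    le_vS_of_mul_le_mul (hpow_ne n) ((coeSubmodule_fg K hinj _).2 hIfg.pow)
      (by rwa [← coeSubmodule_mul, ← pow_succ'])
  have hJ₀t : vS R K J₀ ≤ tI R K J := vS_le_tS hJ₀0 hJ₀fg hJ₀J
  exact ⟨hI.trans hJ₀t, le_antisymm (tS_mono (coeSubmodule_mono K hJI))
    ((tS_le_vS_of_le_vS hI).trans hJ₀t)⟩
end
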